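/- Let τ, ϱ ∈ ℝ^d have nonnegative entries, let O₃ be a d×d orthogonal matrix, and let O₄ be a d×d matrix whose rows and columns all have Euclidean norm at most 1. Then (∑_{i=1}^d √(ϱ_i · ∑_{j=1}^d τ_j (O₃)_{ij} (O₄)_{ji}))² ≤ (∑_i ϱ_i)(∑_j τ_j), provided each inner sum ∑_j τ_j (O₃)_{ij}(O₄)_{ji} is nonnegative. -/
import Mathlib


open scoped BigOperators
open Matrix

/-- Cauchy–Schwarz type bound used in the proof of Theorem 1: for nonnegative vectors `τ, ϱ`,
an orthogonal `O₃` and a matrix `O₄` with all rows and columns of norm at most one,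
`(∑ᵢ √(ϱᵢ ∑ⱼ τⱼ (O₃)ᵢⱼ (O₄)ⱼᵢ))² ≤ (∑ᵢ ϱᵢ)(∑ⱼ τⱼ)`. -/
theorem sq_sum_sqrt_le {d : ℕ} (τ ϱ : Fin d → ℝ) (hτ : ∀ j, 0 ≤ τ j) (hϱ : ∀ i, 0 ≤ ϱ i)
    (O₃ O₄ : Matrix (Fin d) (Fin d) ℝ)
    (h₃a : O₃ * O₃ᵀ = 1) (h₃b : O₃ᵀ * O₃ = 1)
    (h₄row : ∀ i, ∑ j, O₄ i j ^ 2 ≤ 1) (h₄col : ∀ j, ∑ i, O₄ i j ^ 2 ≤ 1)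
    (hpos : ∀ i, 0 ≤ ∑ j, τ j * O₃ i j * O₄ j i) :
    (∑ i, Real.sqrt (ϱ i * ∑ j, τ j * O₃ i j * O₄ j i)) ^ 2 ≤
      (∑ i, ϱ i) * (∑ j, τ j) := by
  set a : Fin d → ℝ := fun i => ∑ j, τ j * O₃ i j * O₄ j i with ha
  -- columns of O₃ have unit norm
  have hcol3 : ∀ j, ∑ i, O₃ i j ^ 2 = 1 := by
    intro j
    have := congrArg (fun M => M j j) h₃b
    simp [Matrix.mul_apply, Matrix.transpose_apply, Matrix.one_apply, sq] at this ⊢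
    simpa [sq] using this
  -- key bound: ∑ i, a i ≤ ∑ j, τ j
  have hsum_a : ∑ i, a i ≤ ∑ j, τ j := by
    rw [ha]
    rw [Finset.sum_comm]
    apply Finset.sum_le_sum
    intro j _
    have h1 : ∑ i, O₃ i j * O₄ j i ≤ 1 := by
      have step : ∀ i, O₃ i j * O₄ j i ≤ (O₃ i j ^ 2 + O₄ j i ^ 2) / 2 := by
        intro i
        nlinarith [sq_nonneg (O₃ i j - O₄ j i)]
      calc ∑ i, O₃ i j * O₄ j i ≤ ∑ i, (O₃ i j ^ 2 + O₄ j i ^ 2) / 2 :=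
            Finset.sum_le_sum fun i _ => step i
        _ = ((∑ i, O₃ i j ^ 2) + ∑ i, O₄ j i ^ 2) / 2 := by
            rw [← Finset.sum_add_distrib, Finset.sum_div]
        _ ≤ (1 + 1) / 2 := by
            have := h₄row j
            have := hcol3 j
            linarith
        _ = 1 := by norm_num
    calc ∑ i, τ j * O₃ i j * O₄ j i = τ j * ∑ i, O₃ i j * O₄ j i := by
          rw [Finset.mul_sum]; congr 1; ext i; ring
      _ ≤ τ j * 1 := mul_le_mul_of_nonneg_left h1 (hτ j)
      _ = τ j := mul_one _
  -- Cauchy–Schwarz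
  have hCS : (∑ i, Real.sqrt (ϱ i * a i)) ^ 2 ≤ (∑ i, ϱ i) * (∑ i, a i) := by

    have := Finset.sum_mul_sq_le_sq_mul_sq Finset.univ (fun i => Real.sqrt (ϱ i))
      (fun i => Real.sqrt (a i))
    have e1 : ∀ i, Real.sqrt (ϱ i) * Real.sqrt (a i) = Real.sqrt (ϱ i * a i) := by
      intro i; rw [← Real.sqrt_mul (hϱ i)]
    have e2 : ∀ i, Real.sqrt (ϱ i) ^ 2 = ϱ i := fun i => Real.sq_sqrt (hϱ i)
    have e3 : ∀ i, Real.sqrt (a i) ^ 2 = a i := fun i => Real.sq_sqrt (hpos i)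
    simp only [e1, e2, e3] at this
    exact this
  have hsum_a_nonneg : 0 ≤ ∑ i, ϱ i := Finset.sum_nonneg fun i _ => hϱ i
  calc (∑ i, Real.sqrt (ϱ i * a i)) ^ 2 ≤ (∑ i, ϱ i) * (∑ i, a i) := hCS
    _ ≤ (∑ i, ϱ i) * (∑ j, τ j) := mul_le_mul_of_nonneg_left hsum_a hsum_a_nonneg
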